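/- arXiv:1806.03484 — 5 statements merged into one kernel-verified Lean document; each statement's English description precedes it below -/
import Mathlib

section
/- Let H₁, H₂ ∈ ℂ^{m×n}, r ∈ ℂ^m, and let W be an m×m diagonal matrix with real diagonal entries w_i. Suppose the measurement rows come in conjugate pairs: there is an involution σ of {1,…,m} such that for every i, the σ(i)-th row of H₁ equals the conjugate of the i-th row of H₂, the σ(i)-th row of H₂ equals the conjugate of the i-th row of H₁, r_{σ(i)} = conj(r_i), and w_{σ(i)} = w_i. Define β_x̄ = (conj H₁)ᵀW r, β_x = (conj H₂)ᵀW r, G_{x̄x} = (conj H₁)ᵀW H₁, G_{x̄x̄} = (conj H₁)ᵀW H₂, G_{xx} = (conj H₂)ᵀW H₁, G_{xx̄} = (conj H₂)ᵀW H₂. Then β_x = conj(β_x̄), G_{xx̄} = conj(G_{x̄x}) = (G_{x̄x})ᵀ, and G_{xx} = (G_{xx})ᵀ = conj(G_{x̄x̄}) = conj((G_{x̄x̄})ᵀ). -/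
open Matrix BigOperators

lemma ent {m n : ℕ} (A B : Matrix (Fin m) (Fin n) ℂ) (d : Fin m → ℂ) (a b : Fin n) :
    (Aᴴ * Matrix.diagonal d * B) a b = ∑ i, star (A i a) * d i * B i b := by
  rw [Matrix.mul_apply]
  simp [Matrix.mul_diagonal, Matrix.conjTranspose_apply]

lemma entv {m n : ℕ} (A : Matrix (Fin m) (Fin n) ℂ) (d : Fin m → ℂ) (r : Fin m → ℂ) (a : Fin n) :
    (Aᴴ *ᵥ (Matrix.diagonal d *ᵥ r)) a = ∑ i, star (A i a) * d i * r i := by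
  simp [Matrix.mulVec, dotProduct, Matrix.diagonal_apply, Finset.mul_sum,
    Matrix.conjTranspose_apply, mul_assoc]

/-- Under the conjugate-pairing involution `σ` on the measurement rows
(`H₁ (σ i) = conj (H₂ i)`, `H₂ (σ i) = conj (H₁ i)`, `r (σ i) = conj (r i)`,
`w (σ i) = w i`), the blocks of the complex normal equations satisfy
`β_x = conj β_x̄`, `G_{xx̄} = conj G_{x̄x} = (G_{x̄x})ᵀ`, and
`G_{xx} = (G_{xx})ᵀ = conj G_{x̄x̄} = conj ((G_{x̄x̄})ᵀ)`. -/
theorem gain_matrix_symmetries (m n : ℕ)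
    (H₁ H₂ : Matrix (Fin m) (Fin n) ℂ) (r : Fin m → ℂ) (w : Fin m → ℝ)
    (σ : Fin m → Fin m) (hσ : ∀ i, σ (σ i) = i)
    (hH₁ : ∀ i, H₁ (σ i) = star (H₂ i))
    (hH₂ : ∀ i, H₂ (σ i) = star (H₁ i))
    (hr : ∀ i, r (σ i) = star (r i))
    (hw : ∀ i, w (σ i) = w i)
    (W : Matrix (Fin m) (Fin m) ℂ)
    (hW : W = Matrix.diagonal fun i => (w i : ℂ))
    (βxb βx : Fin n → ℂ)
    (hβxb : βxb = H₁ᴴ *ᵥ (W *ᵥ r))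
    (hβx : βx = H₂ᴴ *ᵥ (W *ᵥ r))
    (Gxbx Gxbxb Gxx Gxxb : Matrix (Fin n) (Fin n) ℂ)
    (hGxbx : Gxbx = H₁ᴴ * W * H₁)
    (hGxbxb : Gxbxb = H₁ᴴ * W * H₂)
    (hGxx : Gxx = H₂ᴴ * W * H₁)
    (hGxxb : Gxxb = H₂ᴴ * W * H₂) :
    βx = star βxb ∧
    Gxxb = Gxbx.map (starRingEnd ℂ) ∧ Gxbx.map (starRingEnd ℂ) = Gxbxᵀ ∧
    Gxx = Gxxᵀ ∧ Gxxᵀ = Gxbxb.map (starRingEnd ℂ) ∧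
    Gxbxb.map (starRingEnd ℂ) = (Gxbxbᵀ).map (starRingEnd ℂ) := by
  subst hW hβxb hβx hGxbx hGxbxb hGxx hGxxb
  have hb : Function.Bijective σ := Function.Involutive.bijective hσ
  have hH₁' : ∀ i a, H₁ (σ i) a = star (H₂ i a) := fun i a => congrFun (hH₁ i) a
  have hH₂' : ∀ i a, H₂ (σ i) a = star (H₁ i a) := fun i a => congrFun (hH₂ i) a
  refine ⟨?_, ?_, ?_, ?_, ?_, ?_⟩
  · funext a
    rw [Pi.star_apply, entv, entv, ← Fintype.sum_bijective σ hb _ _ (fun i => rfl), star_sum]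
    congr 1; funext i
    simp [hH₁', hH₂', hr, hw]
  · ext a b
    rw [Matrix.map_apply, ent, ent, ← Fintype.sum_bijective σ hb _ _ (fun i => rfl), map_sum]
    congr 1; funext i
    simp [hH₁', hH₂', hr, hw]
  · ext a b
    rw [Matrix.map_apply, Matrix.transpose_apply, ent, ent, map_sum]
    congr 1; funext i
    simp
    ring
  · ext a b
    rw [Matrix.transpose_apply, ent, ent, ← Fintype.sum_bijective σ hb _ _ (fun i => rfl)]
    congr 1; funext i
    simp [hH₁', hH₂', hw]
    ring
  · ext a b
    rw [Matrix.transpose_apply, Matrix.map_apply, ent, ent, map_sum]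
    congr 1; funext i
    simp
    ring
  · ext a b
    rw [Matrix.map_apply, Matrix.map_apply, Matrix.transpose_apply, ent, ent,
      ← Fintype.sum_bijective σ hb _ _ (fun i => rfl), map_sum, map_sum]
    congr 1; funext i
    simp [hH₁', hH₂', hw]
    ring
end

section
/- Let H₁, H₂ ∈ ℂ^{m×n}, r ∈ ℂ^m, and let W be an m×m diagonal matrix with real nonnegative diagonal entries w_i. Suppose there is an involution σ of {1,…,m} such that for every i, the σ(i)-th row of H₁ equals the conjugate of the i-th row of H₂, the σ(i)-th row of H₂ equals the conjugate of the i-th row of H₁, r_{σ(i)} = conj(r_i), and w_{σ(i)} = w_i. Let J₁, J₂ ∈ ℂ^{p×n}, s ∈ ℂ^p, and let F = {v ∈ ℂ^n : J₁v + J₂(conj v) = −s}. Define β_x̄ = (conj H₁)ᵀW r, G_{x̄x} = (conj H₁)ᵀW H₁, G_{x̄x̄} = (conj H₁)ᵀW H₂. If v ∈ F and there exists λ ∈ ℂ^p with G_{x̄x}v + G_{x̄x̄}(conj v) + (conj J₁)ᵀλ + J₂ᵀ(conj λ) = β_x̄, then v minimizes the objective ℓ over F, i.e. ℓ(u) ≥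 ℓ(v) for every u ∈ F. -/
open Matrix BigOperators ComplexOrder

/-- Sufficiency direction of Theorem 1: if `v` is feasible
(`J₁ v + J₂ (conj v) = -s`) and there is a multiplier `λ` satisfying the
stationarity equation `G_{x̄x} v + G_{x̄x̄} (conj v) + (conj J₁)ᵀ λ + J₂ᵀ (conj λ)
= β_x̄`, then `v` minimizes the (real-valued) objective
`ℓ(u) = ½ (conj ρ(u))ᵀ W ρ(u)`, `ρ(u) = r - H₁ u - H₂ (conj u)`,
over the feasible set. -/
theorem cec_stationarity_sufficient (m n p : ℕ)
    (H₁ H₂ : Matrix (Fin m) (Fin n) ℂ) (r : Fin m → ℂ)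
    (w : Fin m → ℝ) (hw : ∀ i, 0 ≤ w i)
    (σ : Fin m → Fin m) (hσ : ∀ i, σ (σ i) = i)
    (hH₁ : ∀ i, H₁ (σ i) = star (H₂ i))
    (hH₂ : ∀ i, H₂ (σ i) = star (H₁ i))
    (hr : ∀ i, r (σ i) = star (r i))
    (hw' : ∀ i, w (σ i) = w i)
    (J₁ J₂ : Matrix (Fin p) (Fin n) ℂ) (s : Fin p → ℂ)
    (W : Matrix (Fin m) (Fin m) ℂ)
    (hW : W = Matrix.diagonal fun i => (w i : ℂ))
    (βxb : Fin n → ℂ) (hβxb : βxb = H₁ᴴ *ᵥ (W *ᵥ r))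
    (Gxbx Gxbxb : Matrix (Fin n) (Fin n) ℂ)
    (hGxbx : Gxbx = H₁ᴴ * W * H₁)
    (hGxbxb : Gxbxb = H₁ᴴ * W * H₂)
    (v : Fin n → ℂ)
    (hfeas : J₁ *ᵥ v + J₂ *ᵥ star v = -s)
    (lam : Fin p → ℂ)
    (hstat : Gxbx *ᵥ v + Gxbxb *ᵥ star v + J₁ᴴ *ᵥ lam + J₂ᵀ *ᵥ star lam = βxb) :
    ∀ u : Fin n → ℂ, J₁ *ᵥ u + J₂ *ᵥ star u = -s →
      (1 / 2 : ℂ) *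
          (star (r - H₁ *ᵥ v - H₂ *ᵥ star v) ⬝ᵥ
            (W *ᵥ (r - H₁ *ᵥ v - H₂ *ᵥ star v)))
        ≤ (1 / 2 : ℂ) *
          (star (r - H₁ *ᵥ u - H₂ *ᵥ star u) ⬝ᵥ
            (W *ᵥ (r - H₁ *ᵥ u - H₂ *ᵥ star u))) := by
  intro u hu
  subst hW hβxb hGxbx hGxbxb
  set ρ : Fin m → ℂ := r - H₁ *ᵥ v - H₂ *ᵥ star v with hρ
  set d : Fin n → ℂ := u - v with hd
  set e : Fin m → ℂ := H₁ *ᵥ d + H₂ *ᵥ star d with he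
  set Wd : Matrix (Fin m) (Fin m) ℂ := Matrix.diagonal fun i => (w i : ℂ) with hWd
  -- residual of u
  have hρu : r - H₁ *ᵥ u - H₂ *ᵥ star u = ρ - e := by
    have hu' : u = v + d := by simp [hd]
    rw [hu', star_add, mulVec_add, mulVec_add]
    simp only [hρ, he]
    abel
  -- feasibility difference
  have hq : J₂ *ᵥ star d = -(J₁ *ᵥ d) := by
    have h0 : (J₁ *ᵥ u + J₂ *ᵥ star u) - (J₁ *ᵥ v + J₂ *ᵥ star v) = 0 := by
      rw [hu, hfeas]; abel
    have h2 : J₁ *ᵥ d + J₂ *ᵥ star d = 0 := by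
      rw [hd, star_sub, mulVec_sub, mulVec_sub]
      calc J₁ *ᵥ u - J₁ *ᵥ v + (J₂ *ᵥ star u - J₂ *ᵥ star v)
          = (J₁ *ᵥ u + J₂ *ᵥ star u) - (J₁ *ᵥ v + J₂ *ᵥ star v) := by abel
        _ = 0 := h0
    linear_combination (norm := abel) h2
  -- conjugate symmetry of the residual under σ
  have hρσ : ∀ i, ρ (σ i) = star (ρ i) := by
    intro i
    have h1 : (H₁ *ᵥ v) (σ i) = star ((H₂ *ᵥ star v) i) := by
      simp [Matrix.mulVec, dotProduct, hH₁ i, star_sum]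
    have h2 : (H₂ *ᵥ star v) (σ i) = star ((H₁ *ᵥ v) i) := by
      simp [Matrix.mulVec, dotProduct, hH₂ i, star_sum]
    simp only [hρ, Pi.sub_apply, h1, h2, hr i, star_sub]
    abel
  -- stationarity rewritten: H₁ᴴ W ρ = J₁ᴴ λ + J₂ᵀ conj λ
  have hstat' : H₁ᴴ *ᵥ (Wd *ᵥ ρ) = J₁ᴴ *ᵥ lam + J₂ᵀ *ᵥ star lam := by
    have h1 : H₁ᴴ *ᵥ (Wd *ᵥ ρ)
        = H₁ᴴ *ᵥ (Wd *ᵥ r) - (H₁ᴴ * Wd * H₁) *ᵥ v - (H₁ᴴ * Wd * H₂) *ᵥ star v := by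
      simp only [hρ, mulVec_sub, Matrix.mulVec_mulVec, Matrix.mul_assoc]
    rw [h1, ← hstat]; abel
  have hWdvec : ∀ x : Fin m → ℂ, Wd *ᵥ x = fun i => (w i : ℂ) * x i := by
    intro x; funext i; rw [hWd]; exact Matrix.mulVec_diagonal _ _ _
  clear_value ρ d e Wd
  -- conjugate of stationarity: H₂ᴴ W ρ = star (H₁ᴴ W ρ)
  have hstat'' : H₂ᴴ *ᵥ (Wd *ᵥ ρ) = star (H₁ᴴ *ᵥ (Wd *ᵥ ρ)) := by
    funext j
    have key : ∀ i, star (H₂ (σ i) j) * ((w (σ i) : ℂ) * ρ (σ i))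
        = star (star (H₁ i j) * ((w i : ℂ) * ρ i)) := by
      intro i
      have hH : H₂ (σ i) j = star (H₁ i j) := by rw [hH₂]; rfl
      rw [hH, hw', hρσ, star_star, star_mul', star_mul']
      rw [show star ((w i : ℂ)) = (w i : ℂ) from Complex.conj_ofReal _]
      rw [star_star]
    calc (H₂ᴴ *ᵥ (Wd *ᵥ ρ)) j
        = ∑ i, star (H₂ i j) * ((w i : ℂ) * ρ i) := by
          rw [hWdvec]
          simp [Matrix.mulVec, dotProduct, Matrix.conjTranspose_apply]
      _ = ∑ i, star (H₂ (σ i) j) * ((w (σ i) : ℂ) * ρ (σ i)) :=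
          (Fintype.sum_equiv (Function.Involutive.toPerm σ hσ) _ _ (fun i => rfl)).symm
      _ = ∑ i, star (star (H₁ i j) * ((w i : ℂ) * ρ i)) :=
          Finset.sum_congr rfl fun i _ => key i
      _ = star ((H₁ᴴ *ᵥ (Wd *ᵥ ρ)) j) := by
          rw [hWdvec]
          simp [Matrix.mulVec, dotProduct, Matrix.conjTranspose_apply, star_sum]
  -- cross term vanishes
  have hcross : star e ⬝ᵥ (Wd *ᵥ ρ) = 0 := by
    have hsplit : star e ⬝ᵥ (Wd *ᵥ ρ)
        = star d ⬝ᵥ (H₁ᴴ *ᵥ (Wd *ᵥ ρ)) + d ⬝ᵥ (H₂ᴴ *ᵥ (Wd *ᵥ ρ)) := by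
      rw [he, star_add, add_dotProduct, star_mulVec, star_mulVec,
        ← dotProduct_mulVec, ← dotProduct_mulVec, star_star]
    set c := J₁ᴴ *ᵥ lam + J₂ᵀ *ᵥ star lam with hc
    have h1 : star d ⬝ᵥ c = star (J₁ *ᵥ d) ⬝ᵥ lam - (J₁ *ᵥ d) ⬝ᵥ star lam := by
      rw [hc, dotProduct_add, dotProduct_mulVec, dotProduct_mulVec,
        ← star_mulVec, vecMul_transpose, hq]
      simp only [neg_dotProduct, dotProduct_neg]
      ring
    have h2 : d ⬝ᵥ star c = star (star d ⬝ᵥ c) := by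
      simp [dotProduct, star_sum]
    have hA : star (star (J₁ *ᵥ d) ⬝ᵥ lam) = (J₁ *ᵥ d) ⬝ᵥ star lam := by
      simp [dotProduct, star_sum]
    have hB : star ((J₁ *ᵥ d) ⬝ᵥ star lam) = star (J₁ *ᵥ d) ⬝ᵥ lam := by
      simp [dotProduct, star_sum]
    rw [hsplit, hstat'', hstat', h2, h1, star_sub, hA, hB]
    ring
  have hcross2 : star ρ ⬝ᵥ (Wd *ᵥ e) = 0 := by
    have hkey : star ρ ⬝ᵥ (Wd *ᵥ e) = star (star e ⬝ᵥ (Wd *ᵥ ρ)) := by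
      rw [hWdvec, hWdvec]
      simp only [dotProduct, star_sum, star_mul', Pi.star_apply, star_star]
      refine Finset.sum_congr rfl fun i _ => ?_
      rw [show star ((w i : ℂ)) = (w i : ℂ) from Complex.conj_ofReal _]
      ring
    rw [hkey, hcross, star_zero]
  -- the quadratic term is nonnegative
  have hquad : 0 ≤ star e ⬝ᵥ (Wd *ᵥ e) := by
    have hrw : star e ⬝ᵥ (Wd *ᵥ e) = ∑ i, (w i : ℂ) * (star (e i) * e i) := by
      rw [hWdvec]
      simp only [dotProduct, Pi.star_apply]
      exact Finset.sum_congr rfl fun i _ => by ring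
    rw [hrw]
    refine Finset.sum_nonneg fun i _ => mul_nonneg ?_ (star_mul_self_nonneg _)
    exact Complex.zero_le_real.mpr (hw i)
  -- assemble
  have hexpand : star (r - H₁ *ᵥ u - H₂ *ᵥ star u) ⬝ᵥ
      (Wd *ᵥ (r - H₁ *ᵥ u - H₂ *ᵥ star u))
      = star ρ ⬝ᵥ (Wd *ᵥ ρ) + star e ⬝ᵥ (Wd *ᵥ e) := by
    rw [hρu, star_sub, mulVec_sub, sub_dotProduct, dotProduct_sub, dotProduct_sub,
      hcross, hcross2]
    ring
  rw [hexpand]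
  have h12 : (0:ℂ) ≤ 1/2 := by
    rw [Complex.le_def]; norm_num
  exact mul_le_mul_of_nonneg_left (le_add_of_nonneg_right hquad) h12
end

section
/- Let H₁, H₂ ∈ ℂ^{m×n}, r ∈ ℂ^m, and let W be an m×m diagonal matrix with real nonnegative diagonal entries w_i. Suppose there is an involution σ of {1,…,m} such that for every i, the σ(i)-th row of H₁ equals the conjugate of the i-th row of H₂, the σ(i)-th row of H₂ equals the conjugate of the i-th row of H₁, r_{σ(i)} = conj(r_i), and w_{σ(i)} = w_i. Let J₁, J₂ ∈ ℂ^{p×n}, s ∈ ℂ^p, and suppose the ℝ-linear map v ↦ J₁v + J₂(conj v) from ℂ^n to ℂ^p is surjective. Define β_x̄ = (conj H₁)ᵀW r, G_{x̄x} = (conj H₁)ᵀW H₁, G_{x̄x̄} = (conj H₁)ᵀW H₂. If v ∈ ℂ^n satisfies J₁v + J₂(conj v) = −s and v minimizes the objective ℓ over the feasible set F = {u ∈ ℂ^n : J₁u + J₂(conj u) = −s}, then there exists λ ∈ ℂ^p such that G_{x̄x}v + G_{x̄x̄}(conj v) + (conj J₁)ᵀλ + J₂ᵀ(conj λ) = β_x̄.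 -/
open Matrix ComplexOrder

/-!
Let `T d = J₁ d + J₂ (conj d)` and `L d = H₁ d + H₂ (conj d)`; both are ℝ-linear, and
`ρ(v + t d) = ρ(v) - t L d`. For `d ∈ ker T` and real `t`, `v + t d` is feasible, and the
objective is a real quadratic in `t` minimized at `t = 0`, so its linear coefficient
`Re ⟨W ρ(v), L d⟩` vanishes. The σ-symmetry of the data makes `W ρ(v)` conjugate-symmetric
under σ, which turns this coefficient into `2 Re ⟨g, d⟩` with `g = (conj H₁)ᵀ W ρ(v)`.
Thus `d ↦ Re ⟨g, d⟩` vanishes on `ker T`; as `T` is surjective it factors through `T` as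
`Re ⟨λ, T d⟩ = Re ⟨(conj J₁)ᵀ λ + J₂ᵀ (conj λ), d⟩`, whence `g = (conj J₁)ᵀ λ + J₂ᵀ (conj λ)`,
which is the claimed normal equation.
-/

theorem eq_zero_of_forall_mul_le_mul_sq {a b : ℝ} (h : ∀ t : ℝ, a * t ≤ b * t ^ 2) : a = 0 := by
  set t := a / (|b| + 1)
  have ha : a = t * (|b| + 1) := (div_mul_cancel₀ a (by positivity)).symm
  have ht : t ^ 2 ≤ 0 := by
    have hmin := h t
    rw [ha] at hmin
    nlinarith [mul_le_mul_of_nonneg_right (le_abs_self b) (sq_nonneg t)]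
  rw [ha, pow_eq_zero_iff two_ne_zero |>.mp (le_antisymm ht (sq_nonneg t)), zero_mul]

theorem LinearMap.exists_comp_eq_of_ker_le {K V V' V'' : Type*} [Field K] [AddCommGroup V]
    [Module K V] [AddCommGroup V'] [Module K V'] [AddCommGroup V''] [Module K V'']
    {f : V →ₗ[K] V'} (hf : Function.Surjective f) {g : V →ₗ[K] V''}
    (h : LinearMap.ker f ≤ LinearMap.ker g) : ∃ ψ : V' →ₗ[K] V'', ψ ∘ₗ f = g := by
  obtain ⟨s, hs⟩ := f.exists_rightInverse_of_surjective (LinearMap.range_eq_top.2 hf)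
  refine ⟨g ∘ₗ s, LinearMap.ext fun x => ?_⟩
  have : x - s (f x) ∈ LinearMap.ker g := h <| by
    simp [LinearMap.mem_ker, ← LinearMap.comp_apply f s, hs]
  exact (sub_eq_zero.mp (by simpa using this)).symm

namespace Matrix

variable {ι κ : Type*} [Fintype ι]

def widelyLinear (A B : Matrix κ ι ℂ) : (ι → ℂ) →ₗ[ℝ] (κ → ℂ) where
  toFun d := A *ᵥ d + B *ᵥ star d
  map_add' x y := by simp only [star_add, mulVec_add]; abel
  map_smul' t x := by simp [star_smul, mulVec_smul, smul_add]

@[simp]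
theorem widelyLinear_apply (A B : Matrix κ ι ℂ) (d : ι → ℂ) :
    widelyLinear A B d = A *ᵥ d + B *ᵥ star d :=
  rfl

/-- The real inner product of `ℂ^ι ≅ ℝ^(2ι)`, as a functional in its second argument. -/
def reStarDotProduct (x : ι → ℂ) : (ι → ℂ) →ₗ[ℝ] ℝ where
  toFun d := (star x ⬝ᵥ d).re
  map_add' d e := by simp [dotProduct_add]
  map_smul' t d := by simp [dotProduct_smul, Complex.real_smul]

@[simp]
theorem reStarDotProduct_apply (x d : ι → ℂ) : reStarDotProduct x d = (star x ⬝ᵥ d).re :=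
  rfl

theorem reStarDotProduct_injective : Function.Injective (reStarDotProduct (ι := ι)) := by
  intro x y h
  have hre := LinearMap.congr_fun h (x - y)
  rw [reStarDotProduct_apply, reStarDotProduct_apply, ← sub_eq_zero, ← Complex.sub_re,
    ← sub_dotProduct, ← star_sub] at hre
  rw [← sub_eq_zero, ← dotProduct_star_self_eq_zero]
  exact Complex.ext hre (Complex.le_def.mp (dotProduct_star_self_nonneg (x - y))).2.symm

theorem exists_eq_reStarDotProduct (ψ : (ι → ℂ) →ₗ[ℝ] ℝ) :
    ∃ lam : ι → ℂ, ψ = reStarDotProduct lam := by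
  classical
  refine ⟨fun j => ⟨ψ (Pi.single j 1), ψ (Pi.single j Complex.I)⟩, ?_⟩
  refine LinearMap.pi_ext' fun j => Complex.basisOneI.ext fun k => ?_
  fin_cases k <;> simp [Complex.mul_re]

theorem reStarDotProduct_comp_widelyLinear [Fintype κ] (A B : Matrix κ ι ℂ) (lam : κ → ℂ) :
    reStarDotProduct lam ∘ₗ widelyLinear A B =
      reStarDotProduct (Aᴴ *ᵥ lam + Bᵀ *ᵥ star lam) := by
  ext d
  have hA : star lam ⬝ᵥ (A *ᵥ d) = star (Aᴴ *ᵥ lam) ⬝ᵥ d := by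
    rw [dotProduct_mulVec, star_mulVec, conjTranspose_conjTranspose]
  have hB : star (Bᵀ *ᵥ star lam) ⬝ᵥ d = star (star lam ⬝ᵥ (B *ᵥ star d)) := by
    rw [star_dotProduct, mulVec_transpose, dotProduct_comm, ← dotProduct_mulVec]
  simp [dotProduct_add, add_dotProduct, hA, hB]

/-- Lagrange multiplier rule for a surjective widely linear constraint. -/
theorem exists_widelyLinear_adjoint_eq [Fintype κ] {A B : Matrix κ ι ℂ}
    (hT : Function.Surjective (widelyLinear A B)) {g : ι → ℂ}
    (hg : ∀ d, widelyLinear A B d = 0 → reStarDotProduct g d = 0) :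
    ∃ lam : κ → ℂ, Aᴴ *ᵥ lam + Bᵀ *ᵥ star lam = g := by
  obtain ⟨ψ, hψ⟩ := LinearMap.exists_comp_eq_of_ker_le hT (g := reStarDotProduct g) hg
  obtain ⟨lam, rfl⟩ := exists_eq_reStarDotProduct ψ
  exact ⟨lam, reStarDotProduct_injective (by rw [← reStarDotProduct_comp_widelyLinear, hψ])⟩

theorem re_star_mulVec_dotProduct_eq_zero_of_forall_le {W : Matrix ι ι ℂ} (hW : W.IsHermitian)
    {x h : ι → ℂ}
    (hmin : ∀ t : ℝ, (star x ⬝ᵥ (W *ᵥ x)).re ≤ (star (x - t • h) ⬝ᵥ (W *ᵥ (x - t • h))).re) :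
    (star (W *ᵥ x) ⬝ᵥ h).re = 0 := by
  set c := star (W *ᵥ x) ⬝ᵥ h
  have hxh : star x ⬝ᵥ (W *ᵥ h) = c := by
    rw [dotProduct_mulVec, ← hW.eq, ← star_mulVec]
  have hhx : star h ⬝ᵥ (W *ᵥ x) = star c := star_dotProduct _ _
  have hexp : ∀ t : ℝ, (star (x - t • h) ⬝ᵥ (W *ᵥ (x - t • h))).re =
      (star x ⬝ᵥ (W *ᵥ x)).re - 2 * c.re * t + (star h ⬝ᵥ (W *ᵥ h)).re * t ^ 2 := by
    intro t
    simp only [star_sub, star_smul, star_trivial, mulVec_sub, mulVec_smul, sub_dotProduct,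
      dotProduct_sub, smul_dotProduct, dotProduct_smul, hxh, hhx, Complex.sub_re,
      Complex.real_smul, Complex.mul_re, Complex.ofReal_re, Complex.ofReal_im, Complex.star_def,
      Complex.conj_re]
    ring
  have := eq_zero_of_forall_mul_le_mul_sq (a := 2 * c.re) (b := (star h ⬝ᵥ (W *ᵥ h)).re)
    fun t => by linarith [hmin t, hexp t]
  linarith

theorem re_star_mulVec_dotProduct_eq_zero_of_isMinOn {E F : Type*} [AddCommGroup E] [Module ℝ E]
    [AddCommGroup F] [Module ℝ F] {W : Matrix ι ι ℂ} (hW : W.IsHermitian) (T : E →ₗ[ℝ] F)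
    (L : E →ₗ[ℝ] ι → ℂ) {r : ι → ℂ} {v : E}
    (hmin : IsMinOn (fun u => (star (r - L u) ⬝ᵥ (W *ᵥ (r - L u))).re) {u | T u = T v} v)
    {d : E} (hd : T d = 0) : (star (W *ᵥ (r - L v)) ⬝ᵥ L d).re = 0 :=
  re_star_mulVec_dotProduct_eq_zero_of_forall_le hW fun t => by
    simpa [hd, sub_add_eq_sub_sub] using isMinOn_iff.1 hmin (v + t • d) (by simp [hd])

theorem mulVec_apply_eq_star_of_row_eq_star {A B : Matrix κ ι ℂ} {i k : κ}
    (h : A k = star (B i)) (u : ι → ℂ) : (A *ᵥ u) k = star ((B *ᵥ star u) i) := by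
  change A k ⬝ᵥ u = star (B i ⬝ᵥ star u)
  rw [h, star_dotProduct, dotProduct_comm]

theorem widelyLinear_apply_eq_star {σ : κ → κ} {A B : Matrix κ ι ℂ}
    (hA : ∀ i, A (σ i) = star (B i)) (hB : ∀ i, B (σ i) = star (A i)) (u : ι → ℂ) (i : κ) :
    widelyLinear A B u (σ i) = star (widelyLinear A B u i) := by
  simp [mulVec_apply_eq_star_of_row_eq_star (hA i), mulVec_apply_eq_star_of_row_eq_star (hB i),
    add_comm]

theorem transpose_mulVec_star_eq_conjTranspose_mulVec {σ : ι → ι}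
    (hσ : Function.Involutive σ) {A B : Matrix ι κ ℂ} (hB : ∀ i, B (σ i) = star (A i))
    {y : ι → ℂ} (hy : ∀ i, y (σ i) = star (y i)) : Bᵀ *ᵥ star y = Aᴴ *ᵥ y := by
  funext j
  simp only [mulVec, dotProduct, transpose_apply, conjTranspose_apply, Pi.star_apply]
  rw [← Equiv.sum_comp (hσ.toPerm σ)]
  refine Finset.sum_congr rfl fun i _ => ?_
  simp [hB, hy, mul_comm]

end Matrix

theorem cec_stationarity_necessary_general (m n p : ℕ)
    (H₁ H₂ : Matrix (Fin m) (Fin n) ℂ) (r : Fin m → ℂ)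
    (w : Fin m → ℝ)
    (σ : Fin m → Fin m) (hσ : ∀ i, σ (σ i) = i)
    (hH₁ : ∀ i, H₁ (σ i) = star (H₂ i))
    (hH₂ : ∀ i, H₂ (σ i) = star (H₁ i))
    (hr : ∀ i, r (σ i) = star (r i))
    (hw' : ∀ i, w (σ i) = w i)
    (J₁ J₂ : Matrix (Fin p) (Fin n) ℂ) (s : Fin p → ℂ)
    (hsurj : Function.Surjective fun v : Fin n → ℂ => J₁ *ᵥ v + J₂ *ᵥ star v)
    (W : Matrix (Fin m) (Fin m) ℂ)
    (hW : W = Matrix.diagonal fun i => (w i : ℂ))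
    (βxb : Fin n → ℂ) (hβxb : βxb = H₁ᴴ *ᵥ (W *ᵥ r))
    (Gxbx Gxbxb : Matrix (Fin n) (Fin n) ℂ)
    (hGxbx : Gxbx = H₁ᴴ * W * H₁)
    (hGxbxb : Gxbxb = H₁ᴴ * W * H₂)
    (v : Fin n → ℂ)
    (hfeas : J₁ *ᵥ v + J₂ *ᵥ star v = -s)
    (hmin : ∀ u : Fin n → ℂ, J₁ *ᵥ u + J₂ *ᵥ star u = -s →
      (1 / 2 : ℂ) *
          (star (r - H₁ *ᵥ v - H₂ *ᵥ star v) ⬝ᵥ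
            (W *ᵥ (r - H₁ *ᵥ v - H₂ *ᵥ star v)))
        ≤ (1 / 2 : ℂ) *
          (star (r - H₁ *ᵥ u - H₂ *ᵥ star u) ⬝ᵥ
            (W *ᵥ (r - H₁ *ᵥ u - H₂ *ᵥ star u)))) :
    ∃ lam : Fin p → ℂ,
      Gxbx *ᵥ v + Gxbxb *ᵥ star v + J₁ᴴ *ᵥ lam + J₂ᵀ *ᵥ star lam = βxb := by
  subst hW hβxb hGxbx hGxbxb
  set W : Matrix (Fin m) (Fin m) ℂ := diagonal fun i => (w i : ℂ)
  set ρ := r - widelyLinear H₁ H₂ v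
  have hW : W.IsHermitian := isHermitian_diagonal_of_self_adjoint _ (by ext i; simp)
  have hρ : ∀ i, ρ (σ i) = star (ρ i) := fun i => by
    simp only [ρ, Pi.sub_apply, hr, widelyLinear_apply_eq_star hH₁ hH₂, star_sub]
  have hWρ : ∀ i, (W *ᵥ ρ) (σ i) = star ((W *ᵥ ρ) i) := fun i => by
    simp [W, mulVec_diagonal, hw', hρ]
  have hminOn : IsMinOn (fun u => (star (r - widelyLinear H₁ H₂ u) ⬝ᵥ
      (W *ᵥ (r - widelyLinear H₁ H₂ u))).re) {u | widelyLinear J₁ J₂ u = widelyLinear J₁ J₂ v} v :=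
    isMinOn_iff.2 fun u hu => by
      have h := hmin u (hu.trans hfeas)
      rw [sub_sub, sub_sub] at h
      exact (Complex.le_def.mp (le_of_mul_le_mul_left h (by norm_num))).1
  have hcrit (d) (hd : widelyLinear J₁ J₂ d = 0) :
      reStarDotProduct (H₁ᴴ *ᵥ (W *ᵥ ρ)) d = 0 := by
    have h := re_star_mulVec_dotProduct_eq_zero_of_isMinOn hW _ _ hminOn hd
    rw [← reStarDotProduct_apply, ← LinearMap.comp_apply, reStarDotProduct_comp_widelyLinear,
      transpose_mulVec_star_eq_conjTranspose_mulVec hσ hH₂ hWρ] at h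
    simp only [reStarDotProduct_apply, star_add, add_dotProduct, Complex.add_re] at h ⊢
    linarith
  obtain ⟨lam, hlam⟩ := exists_widelyLinear_adjoint_eq hsurj hcrit
  refine ⟨lam, ?_⟩
  rw [add_assoc, hlam]
  simp only [ρ, widelyLinear_apply, mulVec_sub, mulVec_add, ← mulVec_mulVec]
  abel

/-- Necessity direction of Theorem 1: if the ℝ-linear constraint map
`v ↦ J₁ v + J₂ (conj v)` is surjective and `v` is a feasible minimizer of the
objective `ℓ(u) = ½ (conj ρ(u))ᵀ W ρ(u)`, `ρ(u) = r - H₁ u - H₂ (conj u)`,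
over the feasible set `{u : J₁ u + J₂ (conj u) = -s}`, then there exists a
Lagrange multiplier `λ` with
`G_{x̄x} v + G_{x̄x̄} (conj v) + (conj J₁)ᵀ λ + J₂ᵀ (conj λ) = β_x̄`. -/
theorem cec_stationarity_necessary (m n p : ℕ)
    (H₁ H₂ : Matrix (Fin m) (Fin n) ℂ) (r : Fin m → ℂ)
    (w : Fin m → ℝ) (hw : ∀ i, 0 ≤ w i)
    (σ : Fin m → Fin m) (hσ : ∀ i, σ (σ i) = i)
    (hH₁ : ∀ i, H₁ (σ i) = star (H₂ i))
    (hH₂ : ∀ i, H₂ (σ i) = star (H₁ i))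
    (hr : ∀ i, r (σ i) = star (r i))
    (hw' : ∀ i, w (σ i) = w i)
    (J₁ J₂ : Matrix (Fin p) (Fin n) ℂ) (s : Fin p → ℂ)
    (hsurj : Function.Surjective fun v : Fin n → ℂ => J₁ *ᵥ v + J₂ *ᵥ star v)
    (W : Matrix (Fin m) (Fin m) ℂ)
    (hW : W = Matrix.diagonal fun i => (w i : ℂ))
    (βxb : Fin n → ℂ) (hβxb : βxb = H₁ᴴ *ᵥ (W *ᵥ r))
    (Gxbx Gxbxb : Matrix (Fin n) (Fin n) ℂ)
    (hGxbx : Gxbx = H₁ᴴ * W * H₁)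
    (hGxbxb : Gxbxb = H₁ᴴ * W * H₂)
    (v : Fin n → ℂ)
    (hfeas : J₁ *ᵥ v + J₂ *ᵥ star v = -s)
    (hmin : ∀ u : Fin n → ℂ, J₁ *ᵥ u + J₂ *ᵥ star u = -s →
      (1 / 2 : ℂ) *
          (star (r - H₁ *ᵥ v - H₂ *ᵥ star v) ⬝ᵥ
            (W *ᵥ (r - H₁ *ᵥ v - H₂ *ᵥ star v)))
        ≤ (1 / 2 : ℂ) *
          (star (r - H₁ *ᵥ u - H₂ *ᵥ star u) ⬝ᵥ
            (W *ᵥ (r - H₁ *ᵥ u - H₂ *ᵥ star u)))) :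
    ∃ lam : Fin p → ℂ,
      Gxbx *ᵥ v + Gxbxb *ᵥ star v + J₁ᴴ *ᵥ lam + J₂ᵀ *ᵥ star lam = βxb :=
  cec_stationarity_necessary_general m n p H₁ H₂ r w σ hσ hH₁ hH₂ hr hw' J₁ J₂ s hsurj W hW βxb hβxb
    Gxbx Gxbxb hGxbx hGxbxb v hfeas hmin
end

section
/- Let A, B ∈ ℂ^{n×n}, J₁, J₂ ∈ ℂ^{p×n}, b ∈ ℂ^n, s ∈ ℂ^p. Consider the square block matrix M of size 2(n+p) given by M = [[A, B, (conj J₁)ᵀ, J₂ᵀ], [conj B, conj A, (conj J₂)ᵀ, J₁ᵀ], [J₁, J₂, 0, 0], [conj J₂, conj J₁, 0, 0]]. Suppose M is invertible and that (x, y, λ, μ) ∈ ℂ^n × ℂ^n × ℂ^p × ℂ^p solves M·[x; y; λ; μ] = [b; conj b; −s; −conj s]. Then y = conj x and μ = conj λ; that is, the unique solution of the complex normal equations with equality constraints consists of two pairs of complex conjugate vectors and is therefore admissible. -/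
open Matrix BigOperators

/-- If the block coefficient matrix
`M = [[A, B, (conj J₁)ᵀ, J₂ᵀ], [conj B, conj A, (conj J₂)ᵀ, J₁ᵀ],
      [J₁, J₂, 0, 0], [conj J₂, conj J₁, 0, 0]]`
of the complex normal equations with equality constraints is invertible and
`(x, y, λ, μ)` solves `M [x; y; λ; μ] = [b; conj b; -s; -conj s]`, then
`y = conj x` and `μ = conj λ`: the unique solution consists of two pairs of
complex conjugate vectors. -/
theorem cec_solution_conjugate_pairs (n p : ℕ)
    (A B : Matrix (Fin n) (Fin n) ℂ)
    (J₁ J₂ : Matrix (Fin p) (Fin n) ℂ)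
    (b : Fin n → ℂ) (s : Fin p → ℂ)
    (M : Matrix ((Fin n ⊕ Fin n) ⊕ (Fin p ⊕ Fin p))
                 ((Fin n ⊕ Fin n) ⊕ (Fin p ⊕ Fin p)) ℂ)
    (hM : M = Matrix.fromBlocks
      (Matrix.fromBlocks A B (B.map (starRingEnd ℂ)) (A.map (starRingEnd ℂ)))
      (Matrix.fromBlocks J₁ᴴ J₂ᵀ J₂ᴴ J₁ᵀ)
      (Matrix.fromBlocks J₁ J₂ (J₂.map (starRingEnd ℂ)) (J₁.map (starRingEnd ℂ)))
      0)
    (hMinv : IsUnit M)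
    (x y : Fin n → ℂ) (lam mu : Fin p → ℂ)
    (hsol : M *ᵥ Sum.elim (Sum.elim x y) (Sum.elim lam mu)
      = Sum.elim (Sum.elim b (star b)) (Sum.elim (-s) (-(star s)))) :
    y = star x ∧ mu = star lam := by
  set v : ((Fin n ⊕ Fin n) ⊕ (Fin p ⊕ Fin p)) → ℂ :=
    Sum.elim (Sum.elim x y) (Sum.elim lam mu) with hv
  set r : ((Fin n ⊕ Fin n) ⊕ (Fin p ⊕ Fin p)) → ℂ :=
    Sum.elim (Sum.elim b (star b)) (Sum.elim (-s) (-(star s))) with hr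
  let σ : ((Fin n ⊕ Fin n) ⊕ (Fin p ⊕ Fin p)) → ((Fin n ⊕ Fin n) ⊕ (Fin p ⊕ Fin p)) :=
    Sum.map Sum.swap Sum.swap
  have hσσ : ∀ i, σ (σ i) = i := by rintro ((i|i)|(i|i)) <;> rfl
  have hMσ : ∀ i j, M (σ i) (σ j) = star (M i j) := by
    subst hM
    rintro ((i|i)|(i|i)) ((j|j)|(j|j)) <;>
      simp [σ, Matrix.conjTranspose_apply, Matrix.transpose_apply, Matrix.map_apply]
  have hrσ : ∀ i, r (σ i) = star (r i) := by
    rintro ((i|i)|(i|i)) <;> simp [σ, r]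
  set v' : ((Fin n ⊕ Fin n) ⊕ (Fin p ⊕ Fin p)) → ℂ := fun j => star (v (σ j)) with hv'
  have key : M *ᵥ v' = r := by
    funext i
    have h1 : (M *ᵥ v') i = star ((M *ᵥ v) (σ i)) := by
      have hbij : Function.Bijective σ :=
        Function.bijective_iff_has_inverse.2 ⟨σ, hσσ, hσσ⟩
      calc (M *ᵥ v') i = ∑ j, M i j * star (v (σ j)) := rfl
        _ = ∑ j, M i (σ j) * star (v (σ (σ j))) :=
            (Fintype.sum_bijective σ hbij _ _ (fun j => rfl)).symm
        _ = ∑ j, star (M (σ i) j * v j) := by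
            refine Finset.sum_congr rfl fun j _ => ?_
            have : star (M (σ i) j) = M i (σ j) := by
              conv_lhs => rw [← hσσ j]
              rw [hMσ, star_star]
            rw [hσσ, star_mul', this]
        _ = star ((M *ᵥ v) (σ i)) := by
            rw [← star_sum]; rfl
    rw [h1, hsol, hrσ, star_star]
  have hdet : IsUnit M.det := (Matrix.isUnit_iff_isUnit_det M).mp hMinv
  have hvv : v' = v := by
    have h := key.trans hsol.symm
    have := congrArg (fun w => M⁻¹ *ᵥ w) h
    simpa [Matrix.mulVec_mulVec, Matrix.nonsing_inv_mul M hdet] using this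
  constructor
  · funext k
    have := congrFun hvv (Sum.inl (Sum.inr k))
    simpa [v, v', σ] using this.symm
  · funext k
    have := congrFun hvv (Sum.inr (Sum.inr k))
    simpa [v, v', σ] using this.symm
end

section
/- Let H₁, H₂ ∈ ℂ^{m×n}, r ∈ ℂ^m, and let W be an m×m diagonal matrix with real nonnegative diagonal entries w_i. Suppose there is an involution σ of {1,…,m} such that for every i, the σ(i)-th row of H₁ equals the conjugate of the i-th row of H₂, the σ(i)-th row of H₂ equals the conjugate of the i-th row of H₁, r_{σ(i)} = conj(r_i), and w_{σ(i)} = w_i. Define β_x̄ = (conj H₁)ᵀW r, G_{x̄x} = (conj H₁)ᵀW H₁, G_{x̄x̄} = (conj H₁)ᵀW H₂. Then v ∈ ℂ^n minimizes the objective ℓ over all of ℂ^n (i.e. ℓ(u) ≥ ℓ(v) for every u ∈ ℂ^n) if and only if G_{x̄x}v + G_{x̄x̄}(conj v) = β_x̄. -/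
open Matrix BigOperators ComplexOrder

private lemma cne_diag_dot_real {m : ℕ} (w : Fin m → ℝ) (x : Fin m → ℂ) :
    star x ⬝ᵥ ((Matrix.diagonal fun i => (w i : ℂ)) *ᵥ x)
      = ((∑ i, w i * Complex.normSq (x i) : ℝ) : ℂ) := by
  push_cast
  simp only [dotProduct, mulVec_diagonal, Pi.star_apply, Complex.star_def,
    Complex.normSq_eq_conj_mul_self]
  exact Finset.sum_congr rfl fun i _ => by ring

private lemma cne_diag_dot_swap {m : ℕ} (w : Fin m → ℝ) (x y : Fin m → ℂ) :
    star x ⬝ᵥ ((Matrix.diagonal fun i => (w i : ℂ)) *ᵥ y)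
      = star (star y ⬝ᵥ ((Matrix.diagonal fun i => (w i : ℂ)) *ᵥ x)) := by
  simp only [dotProduct, mulVec_diagonal, Pi.star_apply, Complex.star_def, map_sum,
    _root_.map_mul, Complex.conj_conj, Complex.conj_ofReal]
  exact Finset.sum_congr rfl fun i _ => by ring

private lemma cne_star_mulVec_dot {m n : ℕ} (A : Matrix (Fin m) (Fin n) ℂ)
    (d : Fin n → ℂ) (z : Fin m → ℂ) :
    star (A *ᵥ d) ⬝ᵥ z = star d ⬝ᵥ (Aᴴ *ᵥ z) := by
  rw [star_mulVec, ← dotProduct_mulVec]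

private lemma cne_dot_star {n : ℕ} (d g : Fin n → ℂ) :
    d ⬝ᵥ star g = star (star d ⬝ᵥ g) := by
  simp [dotProduct, map_sum, Complex.star_def, _root_.map_mul]

private lemma cne_star_dot_self {n : ℕ} (g : Fin n → ℂ) :
    star g ⬝ᵥ g = ((∑ j, Complex.normSq (g j) : ℝ) : ℂ) := by
  push_cast
  simp [dotProduct, Complex.normSq_eq_conj_mul_self]

private lemma cne_sym_key {m n : ℕ} (H₁ H₂ : Matrix (Fin m) (Fin n) ℂ) (w : Fin m → ℝ)
    (ρ : Fin m → ℂ) (σ : Fin m → Fin m) (hσ : Function.Involutive σ)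
    (hH₂ : ∀ i, H₂ (σ i) = star (H₁ i)) (hw' : ∀ i, w (σ i) = w i)
    (hρ : ∀ i, ρ (σ i) = star (ρ i)) :
    H₂ᴴ *ᵥ ((Matrix.diagonal fun i => (w i : ℂ)) *ᵥ ρ)
      = star (H₁ᴴ *ᵥ ((Matrix.diagonal fun i => (w i : ℂ)) *ᵥ ρ)) := by
  have hz : ((Matrix.diagonal fun i => (w i : ℂ)) *ᵥ ρ) = fun i => (w i : ℂ) * ρ i :=
    funext fun i => by simp [mulVec_diagonal]
  rw [hz]
  funext j
  simp only [Pi.star_apply, mulVec, dotProduct, conjTranspose_apply,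
    Complex.star_def, map_sum, _root_.map_mul, Complex.conj_conj, Complex.conj_ofReal]
  calc ∑ i, (starRingEnd ℂ) (H₂ i j) * ((w i : ℂ) * ρ i)
      = ∑ i, (starRingEnd ℂ) (H₂ (σ i) j) * ((w (σ i) : ℂ) * ρ (σ i)) :=
        (Fintype.sum_bijective σ hσ.bijective _ _ fun i => rfl).symm
    _ = ∑ i, H₁ i j * ((w i : ℂ) * (starRingEnd ℂ) (ρ i)) := by
        simp [hH₂, hw', hρ]
    _ = _ := Finset.sum_congr rfl fun i _ => by ring

private lemma cne_rho_sym {m n : ℕ} (H₁ H₂ : Matrix (Fin m) (Fin n) ℂ) (r : Fin m → ℂ)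
    (v : Fin n → ℂ) (σ : Fin m → Fin m)
    (hH₁ : ∀ i, H₁ (σ i) = star (H₂ i))
    (hH₂ : ∀ i, H₂ (σ i) = star (H₁ i))
    (hr : ∀ i, r (σ i) = star (r i)) (i : Fin m) :
    (r - H₁ *ᵥ v - H₂ *ᵥ star v) (σ i) = star ((r - H₁ *ᵥ v - H₂ *ᵥ star v) i) := by
  simp only [Pi.sub_apply, Pi.star_apply, mulVec, dotProduct, hr, hH₁, hH₂,
    Complex.star_def, map_sub, map_sum, _root_.map_mul, Pi.star_apply, Complex.conj_conj]
  ring_nf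

/-- Under the conjugate-pairing hypothesis on the measurement rows, `v` minimizes
the objective `ℓ(u) = ½ (conj ρ(u))ᵀ W ρ(u)`, `ρ(u) = r - H₁ u - H₂ (conj u)`,
over all of `ℂ^n` if and only if it satisfies the first block of the complex
normal equations: `G_{x̄x} v + G_{x̄x̄} (conj v) = β_x̄`. -/
theorem cne_minimizer_iff (m n : ℕ)
    (H₁ H₂ : Matrix (Fin m) (Fin n) ℂ) (r : Fin m → ℂ)
    (w : Fin m → ℝ) (hw : ∀ i, 0 ≤ w i)
    (σ : Fin m → Fin m) (hσ : ∀ i, σ (σ i) = i)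
    (hH₁ : ∀ i, H₁ (σ i) = star (H₂ i))
    (hH₂ : ∀ i, H₂ (σ i) = star (H₁ i))
    (hr : ∀ i, r (σ i) = star (r i))
    (hw' : ∀ i, w (σ i) = w i)
    (W : Matrix (Fin m) (Fin m) ℂ)
    (hW : W = Matrix.diagonal fun i => (w i : ℂ))
    (βxb : Fin n → ℂ) (hβxb : βxb = H₁ᴴ *ᵥ (W *ᵥ r))
    (Gxbx Gxbxb : Matrix (Fin n) (Fin n) ℂ)
    (hGxbx : Gxbx = H₁ᴴ * W * H₁)
    (hGxbxb : Gxbxb = H₁ᴴ * W * H₂)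
    (v : Fin n → ℂ) :
    (∀ u : Fin n → ℂ,
        (1 / 2 : ℂ) *
            (star (r - H₁ *ᵥ v - H₂ *ᵥ star v) ⬝ᵥ
              (W *ᵥ (r - H₁ *ᵥ v - H₂ *ᵥ star v)))
          ≤ (1 / 2 : ℂ) *
            (star (r - H₁ *ᵥ u - H₂ *ᵥ star u) ⬝ᵥ
              (W *ᵥ (r - H₁ *ᵥ u - H₂ *ᵥ star u))))
      ↔ Gxbx *ᵥ v + Gxbxb *ᵥ star v = βxb := by
  subst hW hβxb hGxbx hGxbxb
  set Wd : Matrix (Fin m) (Fin m) ℂ := Matrix.diagonal fun i => (w i : ℂ) with hWd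
  set ρv : Fin m → ℂ := r - H₁ *ᵥ v - H₂ *ᵥ star v with hρv
  set g : Fin n → ℂ := H₁ᴴ *ᵥ (Wd *ᵥ ρv) with hgdef
  -- the normal equations are equivalent to g = 0
  have hiff2 : (H₁ᴴ * Wd * H₁) *ᵥ v + (H₁ᴴ * Wd * H₂) *ᵥ star v = H₁ᴴ *ᵥ (Wd *ᵥ r)
      ↔ g = 0 := by
    have hexp : g = H₁ᴴ *ᵥ (Wd *ᵥ r)
        - ((H₁ᴴ * Wd * H₁) *ᵥ v + (H₁ᴴ * Wd * H₂) *ᵥ star v) := by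
      rw [hgdef, hρv]
      simp only [Matrix.mulVec_sub, Matrix.mulVec_mulVec, Matrix.mul_assoc]
      abel
    rw [hexp, sub_eq_zero, eq_comm]
  -- symmetry consequence
  have hsym : H₂ᴴ *ᵥ (Wd *ᵥ ρv) = star g :=
    cne_sym_key H₁ H₂ w ρv σ hσ hH₂ hw'
      (cne_rho_sym H₁ H₂ r v σ hH₁ hH₂ hr)
  -- the displacement map
  set Y : (Fin n → ℂ) → (Fin m → ℂ) := fun d => H₁ *ᵥ d + H₂ *ᵥ star d with hY
  have hρu : ∀ u : Fin n → ℂ,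
      r - H₁ *ᵥ u - H₂ *ᵥ star u = ρv - Y (u - v) := by
    intro u
    rw [hρv, hY]
    simp only [star_sub, Matrix.mulVec_sub]
    abel
  -- cross term
  have hcross : ∀ d : Fin n → ℂ,
      star (Y d) ⬝ᵥ (Wd *ᵥ ρv) = star d ⬝ᵥ g + star (star d ⬝ᵥ g) := by
    intro d
    rw [hY]
    simp only [star_add, add_dotProduct]
    rw [cne_star_mulVec_dot, cne_star_mulVec_dot, star_star, hsym, ← hgdef,
      cne_dot_star]
  -- main per-u reformulation
  have hkey : ∀ u : Fin n → ℂ,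
      ((1 / 2 : ℂ) * (star ρv ⬝ᵥ (Wd *ᵥ ρv))
        ≤ (1 / 2 : ℂ) * (star (r - H₁ *ᵥ u - H₂ *ᵥ star u) ⬝ᵥ
            (Wd *ᵥ (r - H₁ *ᵥ u - H₂ *ᵥ star u))))
      ↔ 0 ≤ (∑ i, w i * Complex.normSq (Y (u - v) i))
          - 4 * (star (u - v) ⬝ᵥ g).re := by
    intro u
    rw [hρu u]
    set y := Y (u - v) with hy
    set s := star (u - v) ⬝ᵥ g with hs
    have hexp : star (ρv - y) ⬝ᵥ (Wd *ᵥ (ρv - y))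
        = star ρv ⬝ᵥ (Wd *ᵥ ρv) - 2 * (s + star s) + star y ⬝ᵥ (Wd *ᵥ y) := by
      have h1 : star y ⬝ᵥ (Wd *ᵥ ρv) = s + star s := hcross (u - v)
      have h2 : star ρv ⬝ᵥ (Wd *ᵥ y) = star s + s := by
        rw [hWd, cne_diag_dot_swap, ← hWd, h1]
        rw [star_add, star_star]
      rw [star_sub, Matrix.mulVec_sub, sub_dotProduct, dotProduct_sub,
        dotProduct_sub, h1, h2]
      ring
    have hQ : star y ⬝ᵥ (Wd *ᵥ y) = ((∑ i, w i * Complex.normSq (y i) : ℝ) : ℂ) := by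
      rw [hWd]; exact cne_diag_dot_real w y
    rw [hexp, hQ, ← sub_nonneg]
    have harith : (1 / 2 : ℂ) * (star ρv ⬝ᵥ (Wd *ᵥ ρv) - 2 * (s + star s)
            + ((∑ i, w i * Complex.normSq (y i) : ℝ) : ℂ))
          - (1 / 2 : ℂ) * (star ρv ⬝ᵥ (Wd *ᵥ ρv))
        = ((((∑ i, w i * Complex.normSq (y i)) - 4 * s.re) / 2 : ℝ) : ℂ) := by
      rw [Complex.star_def, Complex.add_conj]
      push_cast
      ring
    rw [harith, Complex.zero_le_real]
    constructor <;> intro h <;> linarith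
  constructor
  · intro hmin
    rw [hiff2]
    -- show g = 0 via the scaling argument
    set a : ℝ := ∑ j, Complex.normSq (g j) with ha
    have hannz : a = 0 → g = 0 := by
      intro h0
      have := (Finset.sum_eq_zero_iff_of_nonneg
        (fun j _ => Complex.normSq_nonneg (g j))).mp h0
      funext j
      exact Complex.normSq_eq_zero.mp (this j (Finset.mem_univ j))
    by_contra hg
    have hapos : 0 < a := by
      rcases lt_or_eq_of_le (Finset.sum_nonneg fun j _ => Complex.normSq_nonneg (g j)) with h | h
      · exact h
      · exact absurd (hannz h.symm) hg
    set q₀ : ℝ := ∑ i, w i * Complex.normSq (Y g i) with hq₀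
    have hq₀nn : 0 ≤ q₀ :=
      Finset.sum_nonneg fun i _ => mul_nonneg (hw i) (Complex.normSq_nonneg _)
    set t : ℝ := 2 * a / (q₀ + 1) with ht
    have htpos : 0 < t := div_pos (by linarith) (by linarith)
    have hmint := (hkey (v + (t : ℂ) • g)).mp (hmin _)
    have hdv : v + (t : ℂ) • g - v = (t : ℂ) • g := by abel
    rw [hdv] at hmint
    have hYt : Y ((t : ℂ) • g) = (t : ℂ) • Y g := by
      rw [hY]
      have : star ((t : ℂ) • g) = (t : ℂ) • star g := by
        rw [star_smul, Complex.star_def, Complex.conj_ofReal]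
      simp only [this, Matrix.mulVec_smul, smul_add]
    have hq : (∑ i, w i * Complex.normSq (Y ((t : ℂ) • g) i)) = t ^ 2 * q₀ := by
      rw [hYt, hq₀, Finset.mul_sum]
      refine Finset.sum_congr rfl fun i _ => ?_
      simp only [Pi.smul_apply, smul_eq_mul, Complex.normSq_mul, Complex.normSq_ofReal]
      ring
    have hst : (star ((t : ℂ) • g) ⬝ᵥ g).re = t * a := by
      have : star ((t : ℂ) • g) = (t : ℂ) • star g := by
        rw [star_smul, Complex.star_def, Complex.conj_ofReal]
      rw [this, smul_dotProduct, cne_star_dot_self, ← ha, smul_eq_mul]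
      simp
    rw [hq, hst] at hmint
    -- now: 0 ≤ t^2 q₀ - 4 t a with t = 2a/(q₀+1); derive contradiction
    have hteq : t * (q₀ + 1) = 2 * a := by
      rw [ht]; field_simp
    nlinarith [mul_pos htpos hapos, mul_pos htpos htpos]
  · intro heq u
    have hg0 : g = 0 := hiff2.mp heq
    rw [hkey u, hg0]
    simp only [dotProduct_zero, Complex.zero_re, mul_zero, sub_zero]
    exact Finset.sum_nonneg fun i _ => mul_nonneg (hw i) (Complex.normSq_nonneg _)
end
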